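/- Let H be a finite-dimensional complex inner product space and let P be a family of orthogonal projections on H indexed by the vertices of Q_n such that: the sum of P_x over all even vertices equals the identity, the sum of P_x over all odd vertices equals the identity, P_i ∘ P_j = 0 whenever i is even, j is odd and {i,j} is not an edge of Q_n, and every P_x has rank at most 1. Then there exist an admissible edge weighting c of Q_n and a unitary (linear isometric isomorphism) W : H → ℂ^{U_n(c)} such that W ∘ P_x ∘ W⁻¹ = ρ_c(p_x) for every vertex x of Q_n. -/

import Mathlib

open scoped Classical ComplexConjugate

noncomputable section

local notation "⟪" x ", " y "⟫" => @inner ℂ _ _ x y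

/-- Adjacency in the hypercube `Q_n`: differ in exactly one coordinate. -/
def hcAdj {n : ℕ} (x y : Fin n → Bool) : Prop :=
  (Finset.univ.filter (fun k => x k ≠ y k)).card = 1

/-- Flip the `k`-th coordinate. -/
def hcFlip {n : ℕ} (x : Fin n → Bool) (k : Fin n) : Fin n → Bool :=
  Function.update x k (!x k)

/-- A vertex of `Q_n` is even if it has an even number of coordinates equal to `true`. -/
def hcEven {n : ℕ} (x : Fin n → Bool) : Prop :=
  (Finset.univ.filter (fun k => x k = true)).card % 2 = 0

/-- `i` belongs to `U_n(c)`: `i` is even and incident to an edge of nonzero weight. -/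
def inU {n : ℕ} (c : (Fin n → Bool) → (Fin n → Bool) → ℂ) (i : Fin n → Bool) : Prop :=
  hcEven i ∧ ∃ j, hcAdj i j ∧ c i j ≠ 0

/-- `j` belongs to `V_n(c)`: `j` is odd and incident to an edge of nonzero weight. -/
def inV {n : ℕ} (c : (Fin n → Bool) → (Fin n → Bool) → ℂ) (j : Fin n → Bool) : Prop :=
  ¬ hcEven j ∧ ∃ i, hcAdj i j ∧ c i j ≠ 0

/-- An edge weighting `c` of `Q_n` (with `c i j` the weight of the edge `{i,j}`,
`i` even, `j` odd) is admissible. -/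
def Admissible {n : ℕ} (c : (Fin n → Bool) → (Fin n → Bool) → ℂ) : Prop :=
  (∀ j₁, inV c j₁ → ∀ j₂, inV c j₂ →
    ∑ i ∈ Finset.univ.filter (fun i => hcEven i ∧ hcAdj i j₁ ∧ hcAdj i j₂),
      c i j₁ * (starRingEnd ℂ) (c i j₂) = if j₁ = j₂ then 1 else 0) ∧
  (∀ i₁, inU c i₁ → ∀ i₂, inU c i₂ →
    ∑ j ∈ Finset.univ.filter (fun j => ¬ hcEven j ∧ hcAdj i₁ j ∧ hcAdj i₂ j),
      c i₁ j * (starRingEnd ℂ) (c i₂ j) = if i₁ = i₂ then 1 else 0)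

/-- The finite set `U_n(c)` of supported even vertices. -/
def UFin {n : ℕ} (c : (Fin n → Bool) → (Fin n → Bool) → ℂ) : Finset (Fin n → Bool) :=
  Finset.univ.filter (inU c)

/-- The finite set `V_n(c)` of supported odd vertices. -/
def VFin {n : ℕ} (c : (Fin n → Bool) → (Fin n → Bool) → ℂ) : Finset (Fin n → Bool) :=
  Finset.univ.filter (inV c)

/-- For an odd vertex `j`, the vector `ψ_j ∈ ℂ^{U_n(c)}` whose `i`-th entry is `c i j`
if `{i,j}` is an edge of `Q_n` and `0` otherwise. -/
def psi {n : ℕ} (c : (Fin n → Bool) → (Fin n → Bool) → ℂ) (j : Fin n → Bool) :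
    EuclideanSpace ℂ {i : Fin n → Bool // i ∈ UFin c} :=
  WithLp.toLp 2 (fun (i : {i : Fin n → Bool // i ∈ UFin c}) => if hcAdj i.1 j then c i.1 j else 0)

/-- The representation `ρ_c`: an even vertex `i ∈ U_n(c)` is sent to the matrix unit
`E_{ii}`, an odd vertex `j ∈ V_n(c)` to the orthogonal projection onto the span of the
unit vector `ψ_j` (the rank-one matrix `ψ_j ψ_j^*`), and every other vertex to `0`. -/
def rhoRep {n : ℕ} (c : (Fin n → Bool) → (Fin n → Bool) → ℂ) (x : Fin n → Bool) :
    Matrix {i : Fin n → Bool // i ∈ UFin c} {i : Fin n → Bool // i ∈ UFin c} ℂ :=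
  if hcEven x then (fun i i' => if i.1 = x ∧ i'.1 = x then 1 else 0)
  else (fun i i' => psi c x i * (starRingEnd ℂ) (psi c x i'))

lemma aux_rankone {H : Type*} [NormedAddCommGroup H] [InnerProductSpace ℂ H]
    [FiniteDimensional ℂ H] (P : H →ₗ[ℂ] H) (hsym : P.IsSymmetric)
    (hidem : P ∘ₗ P = P) (hrank : Module.finrank ℂ (LinearMap.range P) ≤ 1)
    (hne : P ≠ 0) :
    ∃ e : H, ‖e‖ = 1 ∧ ∀ v, P v = ⟪e, v⟫ • e := by
  obtain ⟨v, hv⟩ : ∃ v, P v ≠ 0 := by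
    by_contra h
    push_neg at h
    exact hne (LinearMap.ext fun w => by simp [h w])
  set u := P v with hu
  have hPP : ∀ w, P (P w) = P w := fun w => LinearMap.ext_iff.mp hidem w
  have hPu : P u = u := hPP v
  have hun : ‖u‖ ≠ 0 := by simpa using hv
  set e : H := ((‖u‖ : ℂ))⁻¹ • u with he
  have hen : ‖e‖ = 1 := by
    rw [he, norm_smul]
    simp [inv_mul_cancel₀ hun]
  have hPe : P e = e := by rw [he, map_smul, hPu]
  have hene : e ≠ 0 := fun h => by simp [h] at hen
  have hrange : Submodule.span ℂ {e} = LinearMap.range P := by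
    apply Submodule.eq_of_le_of_finrank_le
    · rw [Submodule.span_singleton_le_iff_mem]
      exact ⟨e, hPe⟩
    · rw [finrank_span_singleton hene]
      exact hrank
  refine ⟨e, hen, fun w => ?_⟩
  have hw : P w ∈ Submodule.span ℂ ({e} : Set H) := hrange ▸ ⟨w, rfl⟩
  obtain ⟨a, ha⟩ := Submodule.mem_span_singleton.mp hw
  have hee : ⟪e, e⟫ = 1 := by
    rw [inner_self_eq_norm_sq_to_K, hen]; norm_num
  have h1 : ⟪e, P w⟫ = a := by
    rw [← ha, inner_smul_right, hee, mul_one]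
  have h2 : ⟪e, P w⟫ = ⟪e, w⟫ := by
    rw [← hsym e w, hPe]
  rw [← ha, ← h1, h2]

lemma aux_orth {ι : Type*} {H : Type*} [NormedAddCommGroup H] [InnerProductSpace ℂ H]
    (s : Finset ι) (P : ι → H →ₗ[ℂ] H) (hsym : ∀ x, (P x).IsSymmetric)
    (hidem : ∀ x, P x ∘ₗ P x = P x)
    (hsum : ∑ x ∈ s, P x = LinearMap.id)
    {x y : ι} (hx : x ∈ s) (hy : y ∈ s) (hxy : x ≠ y) (v : H) : P x (P y v) = 0 := by
  set u := P y v with hu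
  have hPP : ∀ z w, P z (P z w) = P z w := fun z w => LinearMap.ext_iff.mp (hidem z) w
  have hPyu : P y u = u := hPP y v
  have hterm : ∀ z, ⟪P z u, u⟫ = ((‖P z u‖ : ℂ)) ^ 2 := by
    intro z
    calc ⟪P z u, u⟫ = ⟪P z (P z u), u⟫ := by rw [hPP]
    _ = ⟪P z u, P z u⟫ := hsym z (P z u) u
    _ = ((‖P z u‖ : ℂ)) ^ 2 := inner_self_eq_norm_sq_to_K (𝕜 := ℂ) (P z u)
  have hsum' : ∑ z ∈ s, ⟪P z u, u⟫ = ⟪u, u⟫ := by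
    rw [← sum_inner]
    congr 1
    have := LinearMap.ext_iff.mp hsum u
    simpa using this
  have hreal : ∑ z ∈ s, (‖P z u‖ ^ 2 : ℝ) = ‖u‖ ^ 2 := by
    have h3 : ((∑ z ∈ s, (‖P z u‖ ^ 2 : ℝ) : ℝ) : ℂ) = ((‖u‖ ^ 2 : ℝ) : ℂ) := by
      push_cast
      calc (∑ z ∈ s, ((‖P z u‖ : ℂ)) ^ 2) = ∑ z ∈ s, ⟪P z u, u⟫ :=
            Finset.sum_congr rfl fun z _ => (hterm z).symm
      _ = ⟪u, u⟫ := hsum'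
      _ = ((‖u‖ : ℂ)) ^ 2 := inner_self_eq_norm_sq_to_K (𝕜 := ℂ) u
    exact_mod_cast h3
  have hsplit : ∑ z ∈ s.erase y, (‖P z u‖ ^ 2 : ℝ) = 0 := by
    have h4 := Finset.add_sum_erase s (fun z => (‖P z u‖ ^ 2 : ℝ)) hy
    simp only [hPyu] at h4
    rw [hreal] at h4
    linarith
  have hzero : (‖P x u‖ ^ 2 : ℝ) = 0 := by
    have hnn : ∀ z ∈ s.erase y, (0:ℝ) ≤ ‖P z u‖ ^ 2 := fun z _ => sq_nonneg _
    exact (Finset.sum_eq_zero_iff_of_nonneg hnn).mp hsplit x (Finset.mem_erase.mpr ⟨hxy, hx⟩)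
  have : ‖P x u‖ = 0 := by nlinarith [norm_nonneg (P x u)]
  simpa using this

/-- Every rank-one family of orthogonal projections on a
finite-dimensional complex inner product space `H`, indexed by the vertices of `Q_n`
and satisfying the hypercube relations (GP1), (GP2), is unitarily equivalent to the
representation `ρ_c` induced by some admissible edge weighting `c` of `Q_n`. -/
theorem rank_one_representation_from_weighting {n : ℕ} (hn : 1 ≤ n)
    {H : Type*} [NormedAddCommGroup H] [InnerProductSpace ℂ H] [FiniteDimensional ℂ H]
    (P : (Fin n → Bool) → H →ₗ[ℂ] H)
    (hsym : ∀ x, (P x).IsSymmetric)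
    (hidem : ∀ x, P x ∘ₗ P x = P x)
    (hrank : ∀ x, Module.finrank ℂ (LinearMap.range (P x)) ≤ 1)
    (hGP1e : ∑ x ∈ Finset.univ.filter (fun x => hcEven x), P x = LinearMap.id)
    (hGP1o : ∑ x ∈ Finset.univ.filter (fun x => ¬ hcEven x), P x = LinearMap.id)
    (hGP2 : ∀ i j, hcEven i → ¬ hcEven j → ¬ hcAdj i j → P i ∘ₗ P j = 0) :
    ∃ c : (Fin n → Bool) → (Fin n → Bool) → ℂ, Admissible c ∧
      ∃ W : H ≃ₗᵢ[ℂ] EuclideanSpace ℂ {i : Fin n → Bool // i ∈ UFin c},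
        ∀ x v, W (P x v) = Matrix.toEuclideanLin (rhoRep c x) (W v) := by
  classical
  -- choose unit vectors spanning the ranges
  have hch : ∀ x : Fin n → Bool, ∃ w : H, P x ≠ 0 → (‖w‖ = 1 ∧ ∀ v, P x v = ⟪w, v⟫ • w) := by
    intro x
    by_cases h : P x = 0
    · exact ⟨0, fun h' => absurd h h'⟩
    · obtain ⟨w, hw1, hw2⟩ := aux_rankone (P x) (hsym x) (hidem x) (hrank x) h
      exact ⟨w, fun _ => ⟨hw1, hw2⟩⟩
  choose e he using hch
  have hnorm : ∀ x, P x ≠ 0 → ‖e x‖ = 1 := fun x hx => (he x hx).1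
  have happ : ∀ x, P x ≠ 0 → ∀ v, P x v = ⟪e x, v⟫ • e x := fun x hx => (he x hx).2
  have hne0 : ∀ x, P x ≠ 0 → e x ≠ 0 := by
    intro x hx h
    have := hnorm x hx
    rw [h] at this
    simp at this
  have hself : ∀ x, P x ≠ 0 → ⟪e x, e x⟫ = 1 := by
    intro x hx
    rw [inner_self_eq_norm_sq_to_K, hnorm x hx]
    norm_num
  have hPe : ∀ x, P x ≠ 0 → P x (e x) = e x := by
    intro x hx
    rw [happ x hx, hself x hx, one_smul]
  -- orthogonality within each parity class
  have horthE : ∀ x y, hcEven x → hcEven y → P x ≠ 0 → P y ≠ 0 → x ≠ y → ⟪e x, e y⟫ = 0 := by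
    intro x y hx hy hPx hPy hxy
    have h0 : P x (P y (e y)) = 0 :=
      aux_orth (Finset.univ.filter (fun z => hcEven z)) P hsym hidem hGP1e
        (by simp [hx]) (by simp [hy]) hxy (e y)
    rw [hPe y hPy, happ x hPx] at h0
    rcases smul_eq_zero.mp h0 with h | h
    · exact h
    · exact absurd h (hne0 x hPx)
  have horthO : ∀ x y, ¬ hcEven x → ¬ hcEven y → P x ≠ 0 → P y ≠ 0 → x ≠ y → ⟪e x, e y⟫ = 0 := by
    intro x y hx hy hPx hPy hxy
    have h0 : P x (P y (e y)) = 0 :=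
      aux_orth (Finset.univ.filter (fun z => ¬ hcEven z)) P hsym hidem hGP1o
        (by simp [hx]) (by simp [hy]) hxy (e y)
    rw [hPe y hPy, happ x hPx] at h0
    rcases smul_eq_zero.mp h0 with h | h
    · exact h
    · exact absurd h (hne0 x hPx)
  have horthC : ∀ i j, hcEven i → ¬ hcEven j → P i ≠ 0 → P j ≠ 0 → ¬ hcAdj i j →
      ⟪e i, e j⟫ = 0 := by
    intro i j hi hj hPi hPj hadj
    have h0 := LinearMap.ext_iff.mp (hGP2 i j hi hj hadj) (e j)
    rw [LinearMap.comp_apply, hPe j hPj, happ i hPi] at h0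
    simp only [LinearMap.zero_apply] at h0
    rcases smul_eq_zero.mp h0 with h | h
    · exact h
    · exact absurd h (hne0 i hPi)
  -- the weighting
  set c : (Fin n → Bool) → (Fin n → Bool) → ℂ := fun i j =>
    if hcEven i ∧ ¬ hcEven j ∧ hcAdj i j ∧ P i ≠ 0 ∧ P j ≠ 0 then ⟪e i, e j⟫ else 0 with hcdef
  have hc_ne : ∀ i j, c i j ≠ 0 →
      hcEven i ∧ ¬ hcEven j ∧ hcAdj i j ∧ P i ≠ 0 ∧ P j ≠ 0 := by
    intro i j h
    by_contra hcond
    rw [hcdef] at h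
    simp only [if_neg hcond] at h
    exact h rfl
  have hc_nadj : ∀ i j, ¬ hcAdj i j → c i j = 0 := by
    intro i j h
    show (if hcEven i ∧ ¬ hcEven j ∧ hcAdj i j ∧ P i ≠ 0 ∧ P j ≠ 0 then ⟪e i, e j⟫ else 0) = 0
    split_ifs with hcond
    · exact absurd hcond.2.2.1 h
    · rfl
  have hc_Pj : ∀ i j, P j = 0 → c i j = 0 := by
    intro i j h
    show (if hcEven i ∧ ¬ hcEven j ∧ hcAdj i j ∧ P i ≠ 0 ∧ P j ≠ 0 then ⟪e i, e j⟫ else 0) = 0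
    split_ifs with hcond
    · exact absurd h hcond.2.2.2.2
    · rfl
  have hcEq : ∀ i j, hcEven i → ¬ hcEven j → P i ≠ 0 → P j ≠ 0 → c i j = ⟪e i, e j⟫ := by
    intro i j hi hj hPi hPj
    by_cases hadj : hcAdj i j
    · show (if hcEven i ∧ ¬ hcEven j ∧ hcAdj i j ∧ P i ≠ 0 ∧ P j ≠ 0 then ⟪e i, e j⟫ else 0)
        = ⟪e i, e j⟫
      split_ifs with hcond
      · rfl
      · exact absurd ⟨hi, hj, hadj, hPi, hPj⟩ hcond
    · rw [hc_nadj i j hadj, horthC i j hi hj hPi hPj hadj]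
  -- characterization of UFin
  have hU : ∀ i, i ∈ UFin c ↔ (hcEven i ∧ P i ≠ 0) := by
    intro i
    simp only [UFin, Finset.mem_filter, Finset.mem_univ, true_and, inU]
    constructor
    · rintro ⟨hi, j, hadj, hcij⟩
      exact ⟨hi, (hc_ne i j hcij).2.2.2.1⟩
    · rintro ⟨hi, hPi⟩
      refine ⟨hi, ?_⟩
      by_contra hall
      push_neg at hall
      have hexp : e i = ∑ j ∈ Finset.univ.filter (fun j => ¬ hcEven j), P j (e i) := by
        have h1 := LinearMap.ext_iff.mp hGP1o (e i)
        rw [LinearMap.sum_apply] at h1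
        simpa using h1.symm
      have hz : ∀ j ∈ Finset.univ.filter (fun j => ¬ hcEven j), P j (e i) = 0 := by
        intro j hj
        have hjodd : ¬ hcEven j := (Finset.mem_filter.mp hj).2
        by_cases hPj : P j = 0
        · simp [hPj]
        · rw [happ j hPj]
          have hij : ⟪e i, e j⟫ = 0 := by
            by_cases hadj : hcAdj i j
            · have := hall j hadj
              rw [hcEq i j hi hjodd hPi hPj] at this
              exact this
            · exact horthC i j hi hjodd hPi hPj hadj
          have : ⟪e j, e i⟫ = 0 := by
            rw [← inner_conj_symm, hij, map_zero]
          rw [this, zero_smul]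
      rw [Finset.sum_eq_zero hz] at hexp
      exact hne0 i hPi hexp
  -- the even orthonormal basis
  have hEon : Orthonormal ℂ (fun i : {i : Fin n → Bool // i ∈ UFin c} => e i.1) := by
    rw [orthonormal_iff_ite]
    intro i j
    by_cases h : i = j
    · subst h
      simp only [if_pos rfl]
      exact hself i.1 ((hU i.1).mp i.2).2
    · rw [if_neg h]
      exact horthE i.1 j.1 ((hU i.1).mp i.2).1 ((hU j.1).mp j.2).1
        ((hU i.1).mp i.2).2 ((hU j.1).mp j.2).2 (fun hh => h (Subtype.ext hh))
  have hEsp : ⊤ ≤ Submodule.span ℂ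
      (Set.range (fun i : {i : Fin n → Bool // i ∈ UFin c} => e i.1)) := by
    intro v _
    have hv : v = ∑ x ∈ Finset.univ.filter (fun x => hcEven x), P x v := by
      have h1 := LinearMap.ext_iff.mp hGP1e v
      rw [LinearMap.sum_apply] at h1
      simpa using h1.symm
    rw [hv]
    apply Submodule.sum_mem
    intro x hx
    by_cases hPx : P x = 0
    · simp [hPx]
    · rw [happ x hPx]
      apply Submodule.smul_mem
      apply Submodule.subset_span
      exact ⟨⟨x, (hU x).mpr ⟨(Finset.mem_filter.mp hx).2, hPx⟩⟩, rfl⟩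
  let b : OrthonormalBasis {i : Fin n → Bool // i ∈ UFin c} ℂ H :=
    OrthonormalBasis.mk hEon hEsp
  have hb : ∀ i, b i = e i.1 := fun i => by rw [OrthonormalBasis.coe_mk]
  have hbr : ∀ (v : H) i, b.repr v i = ⟪e i.1, v⟫ := by
    intro v i
    rw [b.repr_apply_apply, hb]
  -- Parseval for the even basis
  have hPars : ∀ y z : H,
      ⟪y, z⟫ = ∑ i : {i : Fin n → Bool // i ∈ UFin c}, conj ⟪e i.1, y⟫ * ⟪e i.1, z⟫ := by
    intro y z
    rw [← b.repr.inner_map_map y z, PiLp.inner_apply]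
    refine Finset.sum_congr rfl fun i _ => ?_
    rw [RCLike.inner_apply, hbr, hbr, mul_comm]
  -- the odd orthonormal basis
  set OFin : Finset (Fin n → Bool) := Finset.univ.filter (fun j => ¬ hcEven j ∧ P j ≠ 0)
    with hOdef
  have hOon : Orthonormal ℂ (fun j : {j : Fin n → Bool // j ∈ OFin} => e j.1) := by
    rw [orthonormal_iff_ite]
    intro i j
    have hi := Finset.mem_filter.mp i.2
    have hj := Finset.mem_filter.mp j.2
    by_cases h : i = j
    · subst h
      simp only [if_pos rfl]
      exact hself i.1 hi.2.2
    · rw [if_neg h]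
      exact horthO i.1 j.1 hi.2.1 hj.2.1 hi.2.2 hj.2.2 (fun hh => h (Subtype.ext hh))
  have hOsp : ⊤ ≤ Submodule.span ℂ
      (Set.range (fun j : {j : Fin n → Bool // j ∈ OFin} => e j.1)) := by
    intro v _
    have hv : v = ∑ x ∈ Finset.univ.filter (fun x => ¬ hcEven x), P x v := by
      have h1 := LinearMap.ext_iff.mp hGP1o v
      rw [LinearMap.sum_apply] at h1
      simpa using h1.symm
    rw [hv]
    apply Submodule.sum_mem
    intro x hx
    by_cases hPx : P x = 0
    · simp [hPx]
    · rw [happ x hPx]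
      apply Submodule.smul_mem
      apply Submodule.subset_span
      refine ⟨⟨x, ?_⟩, rfl⟩
      rw [hOdef]
      exact Finset.mem_filter.mpr ⟨Finset.mem_univ x, (Finset.mem_filter.mp hx).2, hPx⟩
  let b' : OrthonormalBasis {j : Fin n → Bool // j ∈ OFin} ℂ H :=
    OrthonormalBasis.mk hOon hOsp
  have hb' : ∀ j, b' j = e j.1 := fun j => by rw [OrthonormalBasis.coe_mk]
  have hPars' : ∀ y z : H,
      ⟪y, z⟫ = ∑ j : {j : Fin n → Bool // j ∈ OFin}, conj ⟪e j.1, y⟫ * ⟪e j.1, z⟫ := by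
    intro y z
    rw [← b'.repr.inner_map_map y z, PiLp.inner_apply]
    refine Finset.sum_congr rfl fun j _ => ?_
    rw [RCLike.inner_apply, b'.repr_apply_apply, b'.repr_apply_apply, hb', mul_comm]
  -- Admissibility
  have hAdm : Admissible c := by
    constructor
    · intro j₁ hj₁ j₂ hj₂
      obtain ⟨hj₁o, i₀, hadj₀, hc₀⟩ := hj₁
      obtain ⟨hj₂o, i₀', hadj₀', hc₀'⟩ := hj₂
      have hPj₁ : P j₁ ≠ 0 := (hc_ne _ _ hc₀).2.2.2.2
      have hPj₂ : P j₂ ≠ 0 := (hc_ne _ _ hc₀').2.2.2.2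
      have h1 : ∑ i ∈ Finset.univ.filter (fun i => hcEven i ∧ hcAdj i j₁ ∧ hcAdj i j₂),
          c i j₁ * conj (c i j₂) = ∑ i, c i j₁ * conj (c i j₂) := by
        apply Finset.sum_filter_of_ne
        intro i _ hne
        have h₁ : c i j₁ ≠ 0 := fun h => hne (by rw [h, zero_mul])
        have h₂ : c i j₂ ≠ 0 := fun h => hne (by rw [h, map_zero, mul_zero])
        exact ⟨(hc_ne _ _ h₁).1, (hc_ne _ _ h₁).2.2.1, (hc_ne _ _ h₂).2.2.1⟩
      have h2 : ∑ i ∈ UFin c, c i j₁ * conj (c i j₂) = ∑ i, c i j₁ * conj (c i j₂) := by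
        apply Finset.sum_filter_of_ne
        intro i _ hne
        have h₁ : c i j₁ ≠ 0 := fun h => hne (by rw [h, zero_mul])
        exact ⟨(hc_ne _ _ h₁).1, j₁, (hc_ne _ _ h₁).2.2.1, h₁⟩
      rw [h1, ← h2, ← Finset.sum_coe_sort (UFin c) (fun i => c i j₁ * conj (c i j₂))]
      have h3 : ∑ i : {i : Fin n → Bool // i ∈ UFin c}, c i.1 j₁ * conj (c i.1 j₂)
          = ⟪e j₂, e j₁⟫ := by
        rw [hPars (e j₂) (e j₁)]
        refine Finset.sum_congr rfl fun i _ => ?_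
        have hiU := (hU i.1).mp i.2
        rw [hcEq i.1 j₁ hiU.1 hj₁o hiU.2 hPj₁, hcEq i.1 j₂ hiU.1 hj₂o hiU.2 hPj₂]
        ring
      rw [h3]
      by_cases h : j₁ = j₂
      · subst h
        rw [if_pos rfl, hself j₁ hPj₁]
      · rw [if_neg h, horthO j₂ j₁ hj₂o hj₁o hPj₂ hPj₁ (fun hh => h hh.symm)]
    · intro i₁ hi₁ i₂ hi₂
      obtain ⟨hi₁e, j₀, hadj₀, hc₀⟩ := hi₁
      obtain ⟨hi₂e, j₀', hadj₀', hc₀'⟩ := hi₂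
      have hPi₁ : P i₁ ≠ 0 := (hc_ne _ _ hc₀).2.2.2.1
      have hPi₂ : P i₂ ≠ 0 := (hc_ne _ _ hc₀').2.2.2.1
      have h1 : ∑ j ∈ Finset.univ.filter (fun j => ¬ hcEven j ∧ hcAdj i₁ j ∧ hcAdj i₂ j),
          c i₁ j * conj (c i₂ j) = ∑ j, c i₁ j * conj (c i₂ j) := by
        apply Finset.sum_filter_of_ne
        intro j _ hne
        have h₁ : c i₁ j ≠ 0 := fun h => hne (by rw [h, zero_mul])
        have h₂ : c i₂ j ≠ 0 := fun h => hne (by rw [h, map_zero, mul_zero])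
        exact ⟨(hc_ne _ _ h₁).2.1, (hc_ne _ _ h₁).2.2.1, (hc_ne _ _ h₂).2.2.1⟩
      have h2 : ∑ j ∈ OFin, c i₁ j * conj (c i₂ j) = ∑ j, c i₁ j * conj (c i₂ j) := by
        apply Finset.sum_filter_of_ne
        intro j _ hne
        have h₁ : c i₁ j ≠ 0 := fun h => hne (by rw [h, zero_mul])
        exact ⟨(hc_ne _ _ h₁).2.1, (hc_ne _ _ h₁).2.2.2.2⟩
      rw [h1, ← h2, ← Finset.sum_coe_sort OFin (fun j => c i₁ j * conj (c i₂ j))]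
      have h3 : ∑ j : {j : Fin n → Bool // j ∈ OFin}, c i₁ j.1 * conj (c i₂ j.1)
          = ⟪e i₁, e i₂⟫ := by
        rw [hPars' (e i₁) (e i₂)]
        refine Finset.sum_congr rfl fun j _ => ?_
        have hjO := Finset.mem_filter.mp j.2
        rw [hcEq i₁ j.1 hi₁e hjO.2.1 hPi₁ hjO.2.2, hcEq i₂ j.1 hi₂e hjO.2.1 hPi₂ hjO.2.2]
        rw [← inner_conj_symm (e j.1) (e i₁), ← inner_conj_symm (e i₂) (e j.1)]
        simp only [RingHom.id_apply, starRingEnd_self_apply]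
      rw [h3]
      by_cases h : i₁ = i₂
      · subst h
        rw [if_pos rfl, hself i₁ hPi₁]
      · rw [if_neg h, horthE i₁ i₂ hi₁e hi₂e hPi₁ hPi₂ h]
  -- the unitary and the intertwining relation
  refine ⟨c, hAdm, b.repr, ?_⟩
  intro x v
  have hToE : ∀ (M : Matrix {i : Fin n → Bool // i ∈ UFin c}
      {i : Fin n → Bool // i ∈ UFin c} ℂ) (w : EuclideanSpace ℂ {i : Fin n → Bool // i ∈ UFin c})
      (i : {i : Fin n → Bool // i ∈ UFin c}),
      Matrix.toEuclideanLin M w i = ∑ i', M i i' * w i' := by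
    intro M w i
    rfl
  ext i
  by_cases hx : hcEven x
  · -- even vertex
    have hrho : rhoRep c x = fun i i' => if i.1 = x ∧ i'.1 = x then (1:ℂ) else 0 := by
      rw [rhoRep]; exact if_pos hx
    rw [hToE, hrho]
    by_cases hPx : P x = 0
    · have hxU : x ∉ UFin c := fun h => ((hU x).mp h).2 hPx
      have : ∀ i' : {i : Fin n → Bool // i ∈ UFin c},
          (if i.1 = x ∧ i'.1 = x then (1:ℂ) else 0) * b.repr v i' = 0 := by
        intro i'
        have : ¬ (i.1 = x ∧ i'.1 = x) := by
          rintro ⟨h1, h2⟩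
          exact hxU (h1 ▸ i.2)
        rw [if_neg this, zero_mul]
      rw [Finset.sum_congr rfl (fun i' _ => this i'), Finset.sum_const_zero]
      rw [hPx]
      simp
    · have hxU : x ∈ UFin c := (hU x).mpr ⟨hx, hPx⟩
      have hsum : ∑ i' : {i : Fin n → Bool // i ∈ UFin c},
          (if i.1 = x ∧ i'.1 = x then (1:ℂ) else 0) * b.repr v i'
          = if i.1 = x then b.repr v ⟨x, hxU⟩ else 0 := by
        by_cases hix : i.1 = x
        · simp only [hix, true_and, if_pos]
          have heq : ∀ i' : {i : Fin n → Bool // i ∈ UFin c},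
              (if i'.1 = x then (1:ℂ) else 0) * b.repr v i'
              = if i' = ⟨x, hxU⟩ then b.repr v i' else 0 := by
            intro i'
            by_cases h : i' = ⟨x, hxU⟩
            · rw [if_pos h, if_pos (by rw [h]), one_mul]
            · rw [if_neg h, if_neg (fun hh => h (Subtype.ext hh)), zero_mul]
          rw [Finset.sum_congr rfl (fun i' _ => heq i')]
          rw [Finset.sum_ite_eq' Finset.univ (⟨x, hxU⟩ : {i : Fin n → Bool // i ∈ UFin c})]
          rw [if_pos (Finset.mem_univ _)]
        · have : ∀ i' : {i : Fin n → Bool // i ∈ UFin c},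
              (if i.1 = x ∧ i'.1 = x then (1:ℂ) else 0) * b.repr v i' = 0 := by
            intro i'
            rw [if_neg (fun h => hix h.1), zero_mul]
          rw [Finset.sum_congr rfl (fun i' _ => this i'), Finset.sum_const_zero, if_neg hix]
      rw [hsum, hbr, happ x hPx, inner_smul_right, hbr]
      by_cases hix : i.1 = x
      · rw [if_pos hix, hix, hself x hPx, mul_one]
      · rw [if_neg hix]
        have hiU := (hU i.1).mp i.2
        rw [horthE i.1 x hiU.1 hx hiU.2 hPx hix, mul_zero]
  · -- odd vertex
    have hpsi' : ∀ i' : {i : Fin n → Bool // i ∈ UFin c}, psi c x i' = c i'.1 x := by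
      intro i'
      show (if hcAdj i'.1 x then c i'.1 x else 0) = c i'.1 x
      by_cases h : hcAdj i'.1 x
      · rw [if_pos h]
      · rw [if_neg h, hc_nadj _ _ h]
    have hrho : rhoRep c x = fun i i' => psi c x i * conj (psi c x i') := by
      rw [rhoRep]; exact if_neg hx
    rw [hToE, hrho]
    simp only [hpsi']
    by_cases hPx : P x = 0
    · have hcz : ∀ i' : {i : Fin n → Bool // i ∈ UFin c}, c i'.1 x = 0 :=
        fun i' => hc_Pj i'.1 x hPx
      have hL : b.repr (P x v) i = 0 := by
        rw [hPx]
        simp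
      rw [hL]
      symm
      apply Finset.sum_eq_zero
      intro i' _
      rw [hcz i', map_zero, mul_zero, zero_mul]
    · have h1 : (b.repr (P x v)) i = ⟪e x, v⟫ * c i.1 x := by
        rw [hbr, happ x hPx, inner_smul_right]
        have hiU := (hU i.1).mp i.2
        rw [hcEq i.1 x hiU.1 hx hiU.2 hPx]
      rw [h1]
      have h2 : ∑ i' : {i : Fin n → Bool // i ∈ UFin c},
          c i.1 x * conj (c i'.1 x) * b.repr v i' = c i.1 x * ⟪e x, v⟫ := by
        have hterm : ∀ i' : {i : Fin n → Bool // i ∈ UFin c},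
            c i.1 x * conj (c i'.1 x) * b.repr v i'
            = c i.1 x * (conj (c i'.1 x) * b.repr v i') := fun i' => by ring
        rw [Finset.sum_congr rfl (fun i' _ => hterm i'), ← Finset.mul_sum]
        congr 1
        rw [hPars (e x) v]
        refine Finset.sum_congr rfl fun i' _ => ?_
        rw [hbr, hcEq i'.1 x ((hU i'.1).mp i'.2).1 hx ((hU i'.1).mp i'.2).2 hPx]
      rw [h2]
      ring
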